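/- arXiv:math/0702002 — 2 statements merged into one kernel-verified Lean document; each statement's English description precedes it below -/
import Mathlib

section
/- Let Δ = (W,σ) be an XY-matching of length 2r with σ a single 2r-cycle (1 b_1 b_2 … b_{2r−1}) and W_1 = X. Define τ, a permutation of {2,…,2r}, by τ(i) = b_i. Then sgn(Δ) = (−1)^{r−1}·(−1)^{desc(τ)}, where desc(τ) is the number of descents of τ. -/
open scoped Classical

/-- An XY-matching structure on a word `W : Fin k → Bool` (`true` = `X`, `false` = `Y`):
a permutation `σ` of the positions such that `W_i = X` iff `W_{σ i} = Y`. -/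
def IsXYMatching {k : ℕ} (W : Fin k → Bool) (σ : Equiv.Perm (Fin k)) : Prop :=
  ∀ i, (W i = true ↔ W (σ i) = false)

/-- The negativity of an XY-matching:
`#{i : (W_i = X and σ i < i) or (W_i = Y and σ i > i)}`. -/
noncomputable def negXY {k : ℕ} (W : Fin k → Bool) (σ : Equiv.Perm (Fin k)) : ℕ :=
  (Finset.univ.filter fun i : Fin k =>
    (W i = true ∧ σ i < i) ∨ (W i = false ∧ i < σ i)).card

/-- The cycle count of an XY-matching: the number of disjoint cycles of `σ`
(`σ` has no fixed points, so every point lies on a cycle). -/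
noncomputable def cycXY {k : ℕ} (σ : Equiv.Perm (Fin k)) : ℕ := σ.cycleType.card

/-- `e(Δ)`: the even word obtained by replacing each `X` by `xx` and each `Y` by `yy`. -/
def eWord {k : ℕ} (W : Fin k → Bool) : List Bool := (List.ofFn W).flatMap fun c => [c, c]

/-- Flip helper for booleans. -/
lemma bool_flip_aux {a c : Bool} (h : (a = true ↔ c = false)) : c = !a := by
  cases a <;> cases c <;> simp_all

/-- Splitting a filter by a second predicate. -/
lemma card_filter_split_aux {α : Type*} (s : Finset α) (p q : α → Prop)
    [DecidablePred p] [DecidablePred q] :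
    (s.filter p).card =
      (s.filter fun i => p i ∧ q i).card + (s.filter fun i => p i ∧ ¬ q i).card := by
  classical
  rw [← Finset.filter_filter, ← Finset.filter_filter,
    Finset.card_filter_add_card_filter_not]

/-- Let `Δ = (W,σ)` be an XY-matching of length `2r` whose permutation is the single
`2r`-cycle `(0 b_0 b_1 … b_{2r-2})` (positions indexed from `0`), with `W_0 = X`.
Then `sgn(Δ) = (−1)^{r−1}·(−1)^{desc(b)}`, where `desc(b)` is the number of
descents of the sequence `b`. -/
theorem sgn_single_cycle_eq_descents (r : ℕ) (hr : 1 ≤ r)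
    (W : Fin (2 * r) → Bool) (σ : Equiv.Perm (Fin (2 * r)))
    (hmatch : IsXYMatching W σ)
    (hW0 : W ⟨0, by omega⟩ = true)
    (b : Fin (2 * r - 1) → Fin (2 * r))
    (hinj : Function.Injective b)
    (hb0 : ∀ i, b i ≠ ⟨0, by omega⟩)
    (hσ0 : σ ⟨0, by omega⟩ = b ⟨0, by omega⟩)
    (hσb : ∀ i : Fin (2 * r - 1), σ (b i) =
      if h : (i : ℕ) + 1 < 2 * r - 1 then b ⟨(i : ℕ) + 1, h⟩ else ⟨0, by omega⟩) :
    ((-1 : ℤ)) ^ negXY W σ =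
      (-1) ^ (r - 1) *
        (-1) ^ (Finset.univ.filter (fun i : Fin (2 * r - 1) =>
          ∃ h : (i : ℕ) + 1 < 2 * r - 1, b ⟨(i : ℕ) + 1, h⟩ < b i)).card := by
  have hk : 0 < 2 * r := by omega
  have hk1 : 0 < 2 * r - 1 := by omega
  -- the word alternates along the cycle
  have hWb : ∀ n (h : n < 2 * r - 1), W (b ⟨n, h⟩) = decide (n % 2 = 1) := by
    intro n
    induction n with
    | zero =>
      intro h
      have h0 := hmatch ⟨0, hk⟩
      rw [hσ0] at h0
      have hfalse : W (b ⟨0, hk1⟩) = false := h0.mp hW0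
      simpa using hfalse
    | succ m ih =>
      intro h
      have hm : m < 2 * r - 1 := by omega
      have h1 := hmatch (b ⟨m, hm⟩)
      rw [hσb ⟨m, hm⟩, dif_pos (show ((⟨m, hm⟩ : Fin (2 * r - 1)) : ℕ) + 1 < 2 * r - 1 from h)]
        at h1
      have h2 : W (b ⟨m + 1, h⟩) = !W (b ⟨m, hm⟩) := bool_flip_aux h1
      rw [ih hm] at h2
      rcases (by omega : m % 2 = 0 ∨ m % 2 = 1) with hc | hc
      · have hc1 : (m + 1) % 2 = 1 := by omega
        simp [hc, hc1] at h2 ⊢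
        exact h2
      · have hc1 : ¬ ((m + 1) % 2 = 1) := by omega
        simp [hc, hc1] at h2 ⊢
        exact h2
  -- b is a bijection onto the nonzero positions
  have hsub : Finset.univ.image b ⊆ Finset.univ \ {(⟨0, hk⟩ : Fin (2 * r))} := by
    intro x hx
    obtain ⟨i, -, rfl⟩ := Finset.mem_image.mp hx
    simp [Finset.mem_sdiff, hb0 i]
  have hcard1 : (Finset.univ.image b).card = 2 * r - 1 := by
    rw [Finset.card_image_of_injective _ hinj]
    simp
  have hcard2 : (Finset.univ \ {(⟨0, hk⟩ : Fin (2 * r))}).card = 2 * r - 1 := by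
    rw [Finset.card_sdiff_of_subset (by simp)]
    simp
  have himg : Finset.univ.image b = Finset.univ \ {(⟨0, hk⟩ : Fin (2 * r))} :=
    Finset.eq_of_subset_of_card_le hsub (by omega)
  have hbsurj : ∀ x : Fin (2 * r), x ≠ ⟨0, hk⟩ → ∃ i, b i = x := by
    intro x hx
    have : x ∈ Finset.univ.image b := by
      rw [himg]; simp [hx]
    simpa using this
  -- pull the count back along b
  have hcard : negXY W σ = (Finset.univ.filter fun i : Fin (2 * r - 1) =>
      (W (b i) = true ∧ σ (b i) < b i) ∨ (W (b i) = false ∧ b i < σ (b i))).card := by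
    unfold negXY
    refine (Finset.card_bij (fun i _ => b i) ?_ ?_ ?_).symm
    · intro i hi
      simp only [Finset.mem_filter, Finset.mem_univ, true_and] at hi ⊢
      exact hi
    · intro i _ j _ hij
      exact hinj hij
    · intro x hx
      simp only [Finset.mem_filter, Finset.mem_univ, true_and] at hx
      have hxne : x ≠ ⟨0, hk⟩ := by
        rintro rfl
        rcases hx with ⟨-, hlt⟩ | ⟨hw, -⟩
        · exact absurd hlt (by simp [Fin.lt_def])
        · rw [hW0] at hw; exact absurd hw (by simp)
      obtain ⟨i, rfl⟩ := hbsurj x hxne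
      exact ⟨i, by simpa using hx, rfl⟩
  -- pointwise description of the count
  have hfilter : (Finset.univ.filter fun i : Fin (2 * r - 1) =>
      (W (b i) = true ∧ σ (b i) < b i) ∨ (W (b i) = false ∧ b i < σ (b i))) =
      (Finset.univ.filter fun i : Fin (2 * r - 1) =>
        ((i : ℕ) % 2 = 1 ∧ ∃ h : (i : ℕ) + 1 < 2 * r - 1, b ⟨(i : ℕ) + 1, h⟩ < b i) ∨
        ((i : ℕ) % 2 = 0 ∧ (i : ℕ) + 1 < 2 * r - 1 ∧
          ¬ ∃ h : (i : ℕ) + 1 < 2 * r - 1, b ⟨(i : ℕ) + 1, h⟩ < b i)) := by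
    refine Finset.filter_congr ?_
    rintro ⟨n, hn⟩ -
    simp only [Fin.val_mk] at *
    rw [hσb ⟨n, hn⟩]
    simp only [Fin.val_mk]
    have hw := hWb n hn
    by_cases h1 : n + 1 < 2 * r - 1
    · rw [dif_pos h1]
      have hne : ((b ⟨n, hn⟩ : Fin (2 * r)) : ℕ) ≠ ((b ⟨n + 1, h1⟩ : Fin (2 * r)) : ℕ) := by
        intro he
        have := hinj (Fin.ext he)
        simp [Fin.ext_iff] at this
      have hdiff : (∃ h : n + 1 < 2 * r - 1, b ⟨n + 1, h⟩ < b ⟨n, hn⟩) ↔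
          b ⟨n + 1, h1⟩ < b ⟨n, hn⟩ := ⟨fun ⟨_, hl⟩ => hl, fun hl => ⟨h1, hl⟩⟩
      rw [hw, hdiff]
      rcases (by omega : n % 2 = 0 ∨ n % 2 = 1) with hc | hc
      · simp only [hc, Fin.lt_def]
        norm_num <;> omega
      · simp only [hc, Fin.lt_def]
        norm_num <;> omega
    · rw [dif_neg h1]
      have hc : n % 2 = 0 := by omega
      rw [hw]
      simp only [hc, Fin.lt_def]
      norm_num <;> omega
  -- abbreviations for the three relevant counts
  have hdisj : Disjoint
      (Finset.univ.filter fun i : Fin (2 * r - 1) =>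
        (i : ℕ) % 2 = 1 ∧ ∃ h : (i : ℕ) + 1 < 2 * r - 1, b ⟨(i : ℕ) + 1, h⟩ < b i)
      (Finset.univ.filter fun i : Fin (2 * r - 1) =>
        (i : ℕ) % 2 = 0 ∧ (i : ℕ) + 1 < 2 * r - 1 ∧
          ¬ ∃ h : (i : ℕ) + 1 < 2 * r - 1, b ⟨(i : ℕ) + 1, h⟩ < b i) := by
    rw [Finset.disjoint_left]
    intro i hi hi'
    simp only [Finset.mem_filter, Finset.mem_univ, true_and] at hi hi'
    have h1 := hi.1
    have h2 := hi'.1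
    omega
  have hneg : negXY W σ =
      (Finset.univ.filter fun i : Fin (2 * r - 1) =>
        (i : ℕ) % 2 = 1 ∧ ∃ h : (i : ℕ) + 1 < 2 * r - 1, b ⟨(i : ℕ) + 1, h⟩ < b i).card +
      (Finset.univ.filter fun i : Fin (2 * r - 1) =>
        (i : ℕ) % 2 = 0 ∧ (i : ℕ) + 1 < 2 * r - 1 ∧
          ¬ ∃ h : (i : ℕ) + 1 < 2 * r - 1, b ⟨(i : ℕ) + 1, h⟩ < b i).card := by
    rw [hcard, hfilter, Finset.filter_or, Finset.card_union_of_disjoint hdisj]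
  -- descent count splits
  have hD : (Finset.univ.filter fun i : Fin (2 * r - 1) =>
        ∃ h : (i : ℕ) + 1 < 2 * r - 1, b ⟨(i : ℕ) + 1, h⟩ < b i).card =
      (Finset.univ.filter fun i : Fin (2 * r - 1) =>
        (∃ h : (i : ℕ) + 1 < 2 * r - 1, b ⟨(i : ℕ) + 1, h⟩ < b i) ∧ (i : ℕ) % 2 = 0).card +
      (Finset.univ.filter fun i : Fin (2 * r - 1) =>
        (i : ℕ) % 2 = 1 ∧ ∃ h : (i : ℕ) + 1 < 2 * r - 1, b ⟨(i : ℕ) + 1, h⟩ < b i).card := by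
    rw [card_filter_split_aux _
      (fun i : Fin (2 * r - 1) => ∃ h : (i : ℕ) + 1 < 2 * r - 1, b ⟨(i : ℕ) + 1, h⟩ < b i)
      (fun i : Fin (2 * r - 1) => (i : ℕ) % 2 = 0)]
    congr 1
    refine congrArg Finset.card (Finset.filter_congr fun i _ => ?_)
    constructor
    · rintro ⟨hd, hm⟩
      exact ⟨by omega, hd⟩
    · rintro ⟨hm, hd⟩
      exact ⟨hd, by omega⟩
  -- the even positions with a successor split
  have hE : (Finset.univ.filter fun i : Fin (2 * r - 1) =>
        (i : ℕ) % 2 = 0 ∧ (i : ℕ) + 1 < 2 * r - 1).card =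
      (Finset.univ.filter fun i : Fin (2 * r - 1) =>
        (∃ h : (i : ℕ) + 1 < 2 * r - 1, b ⟨(i : ℕ) + 1, h⟩ < b i) ∧ (i : ℕ) % 2 = 0).card +
      (Finset.univ.filter fun i : Fin (2 * r - 1) =>
        (i : ℕ) % 2 = 0 ∧ (i : ℕ) + 1 < 2 * r - 1 ∧
          ¬ ∃ h : (i : ℕ) + 1 < 2 * r - 1, b ⟨(i : ℕ) + 1, h⟩ < b i).card := by
    rw [card_filter_split_aux _
      (fun i : Fin (2 * r - 1) => (i : ℕ) % 2 = 0 ∧ (i : ℕ) + 1 < 2 * r - 1)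
      (fun i : Fin (2 * r - 1) => ∃ h : (i : ℕ) + 1 < 2 * r - 1, b ⟨(i : ℕ) + 1, h⟩ < b i)]
    congr 1
    · refine congrArg Finset.card (Finset.filter_congr fun i _ => ?_)
      constructor
      · rintro ⟨⟨hm, -⟩, hd⟩
        exact ⟨hd, hm⟩
      · rintro ⟨⟨hl, hlt⟩, hm⟩
        exact ⟨⟨hm, hl⟩, hl, hlt⟩
    · refine congrArg Finset.card (Finset.filter_congr fun i _ => ?_)
      constructor
      · rintro ⟨⟨hm, hl⟩, hd⟩
        exact ⟨hm, hl, hd⟩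
      · rintro ⟨hm, hl, hd⟩
        exact ⟨⟨hm, hl⟩, hd⟩
  -- there are r - 1 even positions with a successor
  have hEcard : (Finset.univ.filter fun i : Fin (2 * r - 1) =>
      (i : ℕ) % 2 = 0 ∧ (i : ℕ) + 1 < 2 * r - 1).card = r - 1 := by
    rw [show r - 1 = (Finset.range (r - 1)).card from (Finset.card_range _).symm]
    refine Finset.card_bij' (fun i _ => (i : ℕ) / 2)
      (fun m hm => ⟨2 * m, by have := Finset.mem_range.mp hm; omega⟩) ?_ ?_ ?_ ?_
    · intro i hi
      simp only [Finset.mem_filter, Finset.mem_univ, true_and] at hi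
      simp only [Finset.mem_range]
      omega
    · intro m hm
      have := Finset.mem_range.mp hm
      simp only [Finset.mem_filter, Finset.mem_univ, true_and, Fin.val_mk]
      omega
    · intro i hi
      simp only [Finset.mem_filter, Finset.mem_univ, true_and] at hi
      apply Fin.ext
      simp only [Fin.val_mk]
      omega
    · intro m hm
      simp only [Fin.val_mk]
      omega
  -- put everything together
  have key : negXY W σ + 2 * (Finset.univ.filter fun i : Fin (2 * r - 1) =>
        (∃ h : (i : ℕ) + 1 < 2 * r - 1, b ⟨(i : ℕ) + 1, h⟩ < b i) ∧ (i : ℕ) % 2 = 0).card =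
      (Finset.univ.filter fun i : Fin (2 * r - 1) =>
        ∃ h : (i : ℕ) + 1 < 2 * r - 1, b ⟨(i : ℕ) + 1, h⟩ < b i).card + (r - 1) := by
    omega
  calc ((-1 : ℤ)) ^ negXY W σ
      = (-1) ^ (negXY W σ + 2 * (Finset.univ.filter fun i : Fin (2 * r - 1) =>
          (∃ h : (i : ℕ) + 1 < 2 * r - 1, b ⟨(i : ℕ) + 1, h⟩ < b i) ∧
            (i : ℕ) % 2 = 0).card) := by
        rw [pow_add, pow_mul]
        norm_num
    _ = (-1) ^ ((Finset.univ.filter fun i : Fin (2 * r - 1) =>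
          ∃ h : (i : ℕ) + 1 < 2 * r - 1, b ⟨(i : ℕ) + 1, h⟩ < b i).card + (r - 1)) := by
        rw [key]
    _ = (-1) ^ (r - 1) * (-1) ^ (Finset.univ.filter fun i : Fin (2 * r - 1) =>
          ∃ h : (i : ℕ) + 1 < 2 * r - 1, b ⟨(i : ℕ) + 1, h⟩ < b i).card := by
        rw [pow_add, mul_comm]
end

section
/- For a smooth (finite-length) path γ and tensors e, f in the tensor algebra T(V*), the iterated-integral functionals satisfy φ_e(γ)·φ_f(γ) = φ_{e ⧢ f}(γ), i.e., the map e ↦ φ_e(γ) is an algebra homomorphism from (T(V*), ⧢) to R. -/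
open scoped Classical

/-- An (m,n)-shuffle: a permutation of `Fin (m+n)` increasing on the first `m`
positions and on the last `n` positions. -/
def IsShuffle (m n : ℕ) (σ : Equiv.Perm (Fin (m + n))) : Prop :=
  (∀ i j : Fin (m + n), i < j → (j : ℕ) < m → σ i < σ j) ∧
  (∀ i j : Fin (m + n), i < j → m ≤ (i : ℕ) → σ i < σ j)

/-- The shuffle product of two basis words, as an element of the tensor algebra
(modelled as the free module on words over the basis `ι`). -/
noncomputable def shuffleWord {ι : Type*} (u v : List ι) : List ι →₀ ℝ :=
  ∑ σ ∈ Finset.univ.filter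
      (fun σ : Equiv.Perm (Fin (u.length + v.length)) => IsShuffle u.length v.length σ),
    Finsupp.single
      (List.ofFn fun p : Fin (u.length + v.length) =>
        (u ++ v).get (Fin.cast (List.length_append : (u ++ v).length = u.length + v.length).symm (σ⁻¹ p))) 1

/-- The shuffle product, extended bilinearly to the whole tensor algebra. -/
noncomputable def shuffleMul {ι : Type*} (a b : List ι →₀ ℝ) : List ι →₀ ℝ :=
  a.sum fun u cu => b.sum fun v cv => (cu * cv) • shuffleWord u v


open MeasureTheory

/-- The iterated integral `∫_{0<t_1<…<t_n<T} dγ^{i_1}_{t_1} ⋯ dγ^{i_n}_{t_n}`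
attached to a basis word `w = (i_1,…,i_n)`. -/
noncomputable def iteratedIntegral (γ : ℝ → Fin 2 → ℝ) (T : ℝ) (w : List (Fin 2)) : ℝ :=
  ∫ u in {u : Fin w.length → ℝ |
      (∀ j, 0 < u j ∧ u j < T) ∧ ∀ j₁ j₂ : Fin w.length, j₁ < j₂ → u j₁ < u j₂},
    ∏ j, deriv (fun r : ℝ => γ r (w.get j)) (u j)

/-- The iterated-integral functional `φ_e(γ)`, extended linearly from basis words. -/
noncomputable def phi (γ : ℝ → Fin 2 → ℝ) (T : ℝ) (a : List (Fin 2) →₀ ℝ) : ℝ :=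
  a.sum fun w c => c * iteratedIntegral γ T w

/-!
By Fubini, `φ_u · φ_v` is the integral of the product integrand over the set of times whose first
`|u|` and last `|v|` coordinates are each increasing. Off the null set where two coordinates
coincide, this set is the disjoint union, over the `(|u|, |v|)`-shuffles `σ`, of the regions where
the coordinates are ordered by `σ`; permuting coordinates maps each region onto the simplex of
dimension `|u| + |v|` and turns the integrand into that of the shuffled word. Bilinearity extends
the identity from words to tensors.
-/

open Set

section Simplex

def simplexSet (k : ℕ) (T : ℝ) : Set (Fin k → ℝ) :=
  {u | (∀ j, u j ∈ Ioo 0 T) ∧ StrictMono u}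

/-- The points `t` of the open cube with `t (σ⁻¹ 0) < t (σ⁻¹ 1) < ⋯`. -/
def permSimplex {k : ℕ} (σ : Equiv.Perm (Fin k)) (T : ℝ) : Set (Fin k → ℝ) :=
  (· ∘ σ.symm) ⁻¹' simplexSet k T

def blockSet (m n : ℕ) (T : ℝ) : Set (Fin (m + n) → ℝ) :=
  {t | (∀ p, t p ∈ Ioo 0 T) ∧ StrictMono (t ∘ Fin.castAdd n) ∧ StrictMono (t ∘ Fin.natAdd m)}

variable {k m n : ℕ} {T : ℝ}

theorem measurableSet_simplexSet (k : ℕ) (T : ℝ) : MeasurableSet (simplexSet k T) := by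
  unfold simplexSet StrictMono
  measurability

theorem measurableSet_permSimplex (σ : Equiv.Perm (Fin k)) (T : ℝ) :
    MeasurableSet (permSimplex σ T) :=
  measurableSet_preimage (by fun_prop) (measurableSet_simplexSet k T)

theorem lt_iff_lt_of_mem_permSimplex {σ : Equiv.Perm (Fin k)} {t : Fin k → ℝ}
    (ht : t ∈ permSimplex σ T) (a b : Fin k) : σ a < σ b ↔ t a < t b := by
  simpa using (ht.2.lt_iff_lt (a := σ a) (b := σ b)).symm

theorem permSimplex_disjoint {σ τ : Equiv.Perm (Fin k)} (h : σ ≠ τ) :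
    Disjoint (permSimplex σ T) (permSimplex τ T) := by
  refine Set.disjoint_left.2 fun t hσ hτ => h ?_
  have hinj : Function.Injective t := hσ.2.injective.of_comp_right σ.symm.surjective
  have heq : t ∘ σ.symm = t ∘ τ.symm := Tuple.unique_monotone hσ.2.monotone hτ.2.monotone
  exact Equiv.symm_bijective.injective (Equiv.ext fun p => hinj (congrFun heq p))

theorem isShuffle_iff {σ : Equiv.Perm (Fin (m + n))} :
    IsShuffle m n σ ↔ StrictMono (σ ∘ Fin.castAdd n) ∧ StrictMono (σ ∘ Fin.natAdd m) := by
  constructor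
  · rintro ⟨h₁, h₂⟩
    exact ⟨fun i j hij => h₁ _ _ (by simpa) (by simp), fun i j hij => h₂ _ _ (by simpa) (by simp)⟩
  · rintro ⟨h₁, h₂⟩
    refine ⟨fun i j hij hj => ?_, fun i j hij hi => ?_⟩
    · exact h₁ (show (⟨i, (Fin.lt_def.1 hij).trans hj⟩ : Fin m) < ⟨j, hj⟩ from hij)
    · have hj : m ≤ (j : ℕ) := hi.trans hij.le
      obtain ⟨i, rfl⟩ : ∃ i' : Fin n, Fin.natAdd m i' = i :=
        ⟨⟨i - m, by omega⟩, Fin.ext (by simp; omega)⟩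
      obtain ⟨j, rfl⟩ : ∃ j' : Fin n, Fin.natAdd m j' = j :=
        ⟨⟨j - m, by omega⟩, Fin.ext (by simp; omega)⟩
      exact h₂ (by simpa using hij)

theorem permSimplex_subset_blockSet {σ : Equiv.Perm (Fin (m + n))} (hσ : IsShuffle m n σ) :
    permSimplex σ T ⊆ blockSet m n T := by
  intro t ht
  have hlt := lt_iff_lt_of_mem_permSimplex ht
  rw [isShuffle_iff] at hσ
  exact ⟨fun p => by simpa using ht.1 (σ p), fun i j hij => (hlt _ _).1 (hσ.1 hij),
    fun i j hij => (hlt _ _).1 (hσ.2 hij)⟩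

theorem exists_isShuffle_mem_permSimplex {t : Fin (m + n) → ℝ} (ht : t ∈ blockSet m n T)
    (hinj : Function.Injective t) : ∃ σ, IsShuffle m n σ ∧ t ∈ permSimplex σ T := by
  set π := Tuple.sort t
  have hmem : t ∈ permSimplex π.symm T := by
    refine ⟨fun p => ht.1 _, ?_⟩
    simpa using (Tuple.monotone_sort t).strictMono_of_injective (hinj.comp π.injective)
  have hlt := lt_iff_lt_of_mem_permSimplex hmem
  exact ⟨π.symm, isShuffle_iff.2 ⟨fun i j hij => (hlt _ _).2 (ht.2.1 hij),
    fun i j hij => (hlt _ _).2 (ht.2.2 hij)⟩, hmem⟩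

theorem volume_setOf_apply_eq_apply {i j : Fin k} (hij : i ≠ j) :
    volume {t : Fin k → ℝ | t i = t j} = 0 := by
  set L : (Fin k → ℝ) →ₗ[ℝ] ℝ :=
    LinearMap.proj (R := ℝ) (φ := fun _ : Fin k => ℝ) i - LinearMap.proj j
  have hL : L ≠ 0 := fun h => by
    simpa [L, Pi.single_apply, hij] using LinearMap.congr_fun h (Pi.single i 1)
  have hker : {t : Fin k → ℝ | t i = t j} = LinearMap.ker L := by
    ext t
    simp [L, sub_eq_zero]
  rw [hker]
  exact Measure.addHaar_submodule _ _ (mt LinearMap.ker_eq_top.1 hL)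

theorem volume_setOf_not_injective (k : ℕ) :
    volume {t : Fin k → ℝ | ¬ Function.Injective t} = 0 := by
  have hsub : {t : Fin k → ℝ | ¬ Function.Injective t} ⊆
      ⋃ (i : Fin k) (j : Fin k) (_ : i ≠ j), {t | t i = t j} := fun t ht => by
    obtain ⟨i, j, hij, hne⟩ := Function.not_injective_iff.1 ht
    exact mem_iUnion₂.2 ⟨i, j, mem_iUnion.2 ⟨hne, hij⟩⟩
  exact measure_mono_null hsub (measure_iUnion_null fun i => measure_iUnion_null fun j =>
    measure_iUnion_null fun hij => volume_setOf_apply_eq_apply hij)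

theorem blockSet_ae_eq_biUnion_permSimplex (m n : ℕ) (T : ℝ) :
    blockSet m n T =ᵐ[volume] ⋃ σ ∈ Finset.univ.filter (IsShuffle m n), permSimplex σ T := by
  refine ae_eq_set.2 ⟨measure_mono_null (fun t ⟨ht, hnot⟩ => ?_)
    (volume_setOf_not_injective _), ?_⟩
  · refine fun hinj => hnot ?_
    obtain ⟨σ, hσ, htσ⟩ := exists_isShuffle_mem_permSimplex ht hinj
    exact mem_iUnion₂.2 ⟨σ, by simpa using hσ, htσ⟩
  · rw [sdiff_eq_empty.2 (iUnion₂_subset fun σ hσ =>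
      permSimplex_subset_blockSet (Finset.mem_filter.1 hσ).2), measure_empty]

end Simplex

section Integrals

variable {E : Type*} [NormedAddCommGroup E] {k m n : ℕ} {T : ℝ}

theorem Continuous.integrableOn_blockSet {F : (Fin (m + n) → ℝ) → E} (hF : Continuous F) :
    IntegrableOn F (blockSet m n T) :=
  (hF.continuousOn.integrableOn_compact (isCompact_univ_pi fun _ => isCompact_Icc)).mono_set
    fun _ ht p _ => Ioo_subset_Icc_self (ht.1 p)

variable [NormedSpace ℝ E]

theorem setIntegral_permSimplex (σ : Equiv.Perm (Fin k)) (F : (Fin k → ℝ) → E) :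
    ∫ t in permSimplex σ T, F t = ∫ t in simplexSet k T, F (t ∘ σ) := by
  set e := MeasurableEquiv.piCongrLeft (fun _ : Fin k => ℝ) σ
  have he : ∀ t, e.symm t = t ∘ σ := fun t => rfl
  have hpre : e.symm ⁻¹' permSimplex σ T = simplexSet k T := by
    ext t; simp [permSimplex, he, Function.comp_assoc]
  rw [← (volume_measurePreserving_piCongrLeft _ σ).symm.setIntegral_preimage_emb
    e.symm.measurableEmbedding, hpre]
  rfl

def finAddSplit (m n : ℕ) : (Fin (m + n) → ℝ) ≃ᵐ (Fin m → ℝ) × (Fin n → ℝ) :=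
  (MeasurableEquiv.piCongrLeft (fun _ => ℝ) finSumFinEquiv).symm.trans
    (MeasurableEquiv.sumPiEquivProdPi fun _ => ℝ)

theorem finAddSplit_apply (t : Fin (m + n) → ℝ) :
    finAddSplit m n t = (t ∘ Fin.castAdd n, t ∘ Fin.natAdd m) := by
  ext <;> simp [finAddSplit, MeasurableEquiv.piCongrLeft, Equiv.piCongrLeft,
    MeasurableEquiv.sumPiEquivProdPi, Equiv.sumPiEquivProdPi]

theorem measurePreserving_finAddSplit (m n : ℕ) :
    MeasurePreserving (finAddSplit m n) volume volume :=
  (volume_measurePreserving_sumPiEquivProdPi _).comp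
    ((volume_measurePreserving_piCongrLeft _ finSumFinEquiv).symm _)

theorem finAddSplit_preimage_simplexSet_prod (m n : ℕ) (T : ℝ) :
    finAddSplit m n ⁻¹' (simplexSet m T ×ˢ simplexSet n T) = blockSet m n T := by
  ext t
  simp only [mem_preimage, finAddSplit_apply, mem_prod, simplexSet, blockSet, mem_ofPred_eq,
    Function.comp_apply, Fin.forall_fin_add (fun p => t p ∈ Ioo 0 T)]
  tauto

theorem setIntegral_blockSet_mul (f : (Fin m → ℝ) → ℝ) (g : (Fin n → ℝ) → ℝ) :
    ∫ t in blockSet m n T, f (t ∘ Fin.castAdd n) * g (t ∘ Fin.natAdd m) =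
      (∫ x in simplexSet m T, f x) * ∫ y in simplexSet n T, g y := by
  rw [← setIntegral_prod_mul, ← finAddSplit_preimage_simplexSet_prod, ← Measure.volume_eq_prod,
    ← (measurePreserving_finAddSplit m n).setIntegral_preimage_emb
      (finAddSplit m n).measurableEmbedding]
  simp only [finAddSplit_apply]

theorem setIntegral_blockSet_eq_sum {F : (Fin (m + n) → ℝ) → E}
    (hF : IntegrableOn F (blockSet m n T)) :
    ∫ t in blockSet m n T, F t =
      ∑ σ ∈ Finset.univ.filter (IsShuffle m n), ∫ t in permSimplex σ T, F t := by
  rw [setIntegral_congr_set (blockSet_ae_eq_biUnion_permSimplex m n T),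
    integral_biUnion_finset _ (fun σ _ => measurableSet_permSimplex σ T)
      (fun σ _ τ _ h => permSimplex_disjoint h)
      (fun σ hσ => hF.mono_set (permSimplex_subset_blockSet (Finset.mem_filter.1 hσ).2))]

end Integrals

theorem setIntegral_simplexSet_mul_eq_sum_shuffle {m n : ℕ} (T : ℝ)
    (G : Fin (m + n) → ℝ → ℝ) (hG : ∀ p, Continuous (G p)) :
    (∫ x in simplexSet m T, ∏ i, G (Fin.castAdd n i) (x i)) *
        (∫ y in simplexSet n T, ∏ j, G (Fin.natAdd m j) (y j)) =
      ∑ σ ∈ Finset.univ.filter (IsShuffle m n),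
        ∫ t in simplexSet (m + n) T, ∏ p, G (σ.symm p) (t p) := by
  set F : (Fin (m + n) → ℝ) → ℝ := fun t => ∏ p, G p (t p)
  have hF : Continuous F := continuous_finsetProd _ fun p _ => (hG p).comp (continuous_apply p)
  calc _ = ∫ t in blockSet m n T, F t := by
          rw [← setIntegral_blockSet_mul]
          simp only [F, Fin.prod_univ_add, Function.comp_apply]
    _ = ∑ σ ∈ Finset.univ.filter (IsShuffle m n), ∫ t in permSimplex σ T, F t :=
          setIntegral_blockSet_eq_sum hF.integrableOn_blockSet
    _ = _ := Finset.sum_congr rfl fun σ _ => by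
          rw [setIntegral_permSimplex]
          congr with t
          simpa [F] using Equiv.prod_comp σ fun p => G (σ.symm p) (t p)

theorem iteratedIntegral_ofFn (γ : ℝ → Fin 2 → ℝ) (T : ℝ) {k : ℕ} (f : Fin k → Fin 2) :
    iteratedIntegral γ T (List.ofFn f) =
      ∫ t in simplexSet k T, ∏ j, deriv (fun r => γ r (f j)) (t j) := by
  suffices ∀ (w : List (Fin 2)) (h : w.length = k), (∀ j, w.get (Fin.cast h.symm j) = f j) →
      iteratedIntegral γ T w = ∫ t in simplexSet k T, ∏ j, deriv (fun r => γ r (f j)) (t j) from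
    this _ List.length_ofFn fun j => by simp
  rintro w rfl hw
  obtain rfl : w.get = f := funext hw
  rfl

theorem iteratedIntegral_ofFn_mul_iteratedIntegral_ofFn (γ : ℝ → Fin 2 → ℝ) (T : ℝ)
    (hγ : ∀ i, ContDiff ℝ 1 fun r : ℝ => γ r i) {m n : ℕ} (f : Fin m → Fin 2)
    (g : Fin n → Fin 2) :
    iteratedIntegral γ T (List.ofFn f) * iteratedIntegral γ T (List.ofFn g) =
      ∑ σ ∈ Finset.univ.filter (IsShuffle m n),
        iteratedIntegral γ T (List.ofFn (Fin.append f g ∘ σ.symm)) := by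
  simpa only [iteratedIntegral_ofFn, Function.comp_apply, Fin.append_left, Fin.append_right]
    using setIntegral_simplexSet_mul_eq_sum_shuffle T
      (fun p => deriv (fun r => γ r (Fin.append f g p))) fun p => (hγ _).continuous_deriv le_rfl

theorem List.get_append_cast {α : Type*} (u v : List α) (q : Fin (u.length + v.length)) :
    (u ++ v).get (Fin.cast List.length_append.symm q) = Fin.append u.get v.get q := by
  induction q using Fin.addCases <;>
    simp [Fin.append_left, Fin.append_right, List.getElem_append_left, List.getElem_append_right]

theorem phi_eq_linearCombination (γ : ℝ → Fin 2 → ℝ) (T : ℝ) :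
    phi γ T = Finsupp.linearCombination ℝ (iteratedIntegral γ T) := by
  ext a
  simp [phi, Finsupp.linearCombination_apply]

theorem iteratedIntegral_mul_iteratedIntegral (γ : ℝ → Fin 2 → ℝ) (T : ℝ)
    (hγ : ∀ i, ContDiff ℝ 1 fun r : ℝ => γ r i) (u v : List (Fin 2)) :
    iteratedIntegral γ T u * iteratedIntegral γ T v = phi γ T (shuffleWord u v) := by
  rw [← List.ofFn_get u, ← List.ofFn_get v, iteratedIntegral_ofFn_mul_iteratedIntegral_ofFn γ T hγ,
    List.ofFn_get, List.ofFn_get, shuffleWord, phi_eq_linearCombination, map_sum]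
  refine Finset.sum_congr rfl fun σ _ => ?_
  rw [Finsupp.linearCombination_single, one_smul]
  simp only [Equiv.Perm.inv_def, List.get_append_cast]
  rfl

theorem phi_mul_eq_phi_shuffle_general (γ : ℝ → Fin 2 → ℝ) (T : ℝ)
    (hγ : ∀ i, ContDiff ℝ 1 fun r : ℝ => γ r i) (a b : List (Fin 2) →₀ ℝ) :
    phi γ T a * phi γ T b = phi γ T (shuffleMul a b) := by
  rw [phi, phi, Finsupp.sum_mul, shuffleMul, phi_eq_linearCombination, map_finsuppSum]
  refine Finsupp.sum_congr fun u _ => ?_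
  rw [Finsupp.mul_sum, map_finsuppSum]
  refine Finsupp.sum_congr fun v _ => ?_
  rw [map_smul, ← phi_eq_linearCombination, ← iteratedIntegral_mul_iteratedIntegral γ T hγ,
    smul_eq_mul]
  ring

/-- For a smooth path `γ` the iterated-integral functionals satisfy
`φ_e(γ)·φ_f(γ) = φ_{e ⧢ f}(γ)`: the map `e ↦ φ_e(γ)` is an algebra homomorphism
from `(T(V*), ⧢)` to `ℝ`. -/
theorem phi_mul_eq_phi_shuffle (γ : ℝ → Fin 2 → ℝ) (T : ℝ) (hT : 0 < T)
    (hγ : ∀ i, ContDiff ℝ 1 fun r : ℝ => γ r i) (a b : List (Fin 2) →₀ ℝ) :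
    phi γ T a * phi γ T b = phi γ T (shuffleMul a b) :=
  phi_mul_eq_phi_shuffle_general γ T hγ a b
end
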